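/- arXiv:1607.07479 — 3 statements merged into one kernel-verified Lean document; each statement's English description precedes it below -/
import Mathlib

section
/- Let M be a complete Riemannian manifold with nonpositive sectional curvature (Hadamard manifold), let w₁,…,wₘ be nonnegative weights summing to 1, and let v₁,…,vₘ ∈ M. Then the function q ↦ Σᵢ wᵢ dist(vᵢ,q)² has a unique global minimizer in M. -/
open scoped BigOperators

/-- In a complete Hadamard space (complete metric space with midpoints satisfying the
nonpositive-curvature comparison inequality, the metric characterization of a simply
connected complete Riemannian manifold of nonpositive sectional curvature), the weighted
sum of squared distances, with nonnegative weights summing to one, has a unique global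
minimizer (the Riemannian center of mass). -/
theorem hadamard_unique_barycenter
    {M : Type*} [MetricSpace M] [CompleteSpace M]
    -- midpoints exist and satisfy the CAT(0) (nonpositive curvature) inequality:
    (hNPC : ∀ p q : M, ∃ mdpt : M,
      dist p mdpt = dist p q / 2 ∧ dist q mdpt = dist p q / 2 ∧
      ∀ x : M, dist x mdpt ^ 2 ≤
        (dist x p ^ 2 + dist x q ^ 2) / 2 - dist p q ^ 2 / 4)
    {m : ℕ} (w : Fin m → ℝ) (hw0 : ∀ i, 0 ≤ w i) (hw1 : ∑ i, w i = 1)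
    (v : Fin m → M) :
    ∃! q : M, IsMinOn (fun p : M => ∑ i, w i * dist (v i) p ^ 2) Set.univ q := by
  set f : M → ℝ := fun p => ∑ i, w i * dist (v i) p ^ 2 with hf
  have hm : m ≠ 0 := by
    rintro rfl
    simp at hw1
  haveI : Nonempty M := ⟨v ⟨0, Nat.pos_of_ne_zero hm⟩⟩
  have hfnonneg : ∀ p, 0 ≤ f p := fun p =>
    Finset.sum_nonneg fun i _ => mul_nonneg (hw0 i) (sq_nonneg _)
  have hfcont : Continuous f := by
    apply continuous_finset_sum
    intro i _
    exact continuous_const.mul (((continuous_const.dist continuous_id).pow 2))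
  -- the key midpoint inequality for f
  have key : ∀ p q : M, ∃ mid : M,
      f mid ≤ (f p + f q) / 2 - dist p q ^ 2 / 4 := by
    intro p q
    obtain ⟨mid, -, -, hx⟩ := hNPC p q
    refine ⟨mid, ?_⟩
    calc f mid ≤ ∑ i, w i * ((dist (v i) p ^ 2 + dist (v i) q ^ 2) / 2
                  - dist p q ^ 2 / 4) :=
          Finset.sum_le_sum fun i _ =>
            mul_le_mul_of_nonneg_left (hx (v i)) (hw0 i)
      _ = ∑ i, ((w i * dist (v i) p ^ 2 + w i * dist (v i) q ^ 2) / 2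
            - w i * (dist p q ^ 2 / 4)) :=
          Finset.sum_congr rfl fun i _ => by ring
      _ = (∑ i, w i * dist (v i) p ^ 2 + ∑ i, w i * dist (v i) q ^ 2) / 2
            - (∑ i, w i) * (dist p q ^ 2 / 4) := by
          rw [Finset.sum_sub_distrib, ← Finset.sum_mul, ← Finset.sum_div,
            ← Finset.sum_add_distrib]
      _ = (f p + f q) / 2 - dist p q ^ 2 / 4 := by rw [hw1]; ring
  -- infimum
  have hbdd : BddBelow (Set.range f) := ⟨0, by rintro x ⟨p, rfl⟩; exact hfnonneg p⟩
  set A : ℝ := ⨅ p, f p with hA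
  have hAle : ∀ p, A ≤ f p := fun p => ciInf_le hbdd p
  -- minimizing sequence
  have hseq : ∀ n : ℕ, ∃ p : M, f p < A + 1 / (n + 1) := by
    intro n
    apply exists_lt_of_ciInf_lt
    have : (0:ℝ) < 1 / (n + 1) := by positivity
    linarith
  choose u hu using hseq
  -- distance bound between near-minimizers
  have hdistsq : ∀ p q : M, dist p q ^ 2 ≤ 2 * (f p - A) + 2 * (f q - A) := by
    intro p q
    obtain ⟨mid, hmid⟩ := key p q
    have := hAle mid
    nlinarith
  have hcauchy : CauchySeq u := by
    rw [Metric.cauchySeq_iff']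
    intro ε hε
    obtain ⟨N, hN⟩ := exists_nat_gt (4 / ε ^ 2)
    refine ⟨N, fun n hn => ?_⟩
    have h1 : f (u n) - A < 1 / (n + 1) := by have := hu n; linarith
    have h2 : f (u N) - A < 1 / (N + 1) := by have := hu N; linarith
    have h3 : (1:ℝ) / (n + 1) ≤ 1 / (N + 1) := by
      apply one_div_le_one_div_of_le (by positivity)
      exact_mod_cast by omega
    have h4 : dist (u n) (u N) ^ 2 < 4 / (N + 1) := by
      have hd := hdistsq (u n) (u N)
      have he : (4:ℝ) / (N + 1) = 4 * (1 / (N + 1)) := by ring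
      rw [he]
      linarith
    have h5 : (4:ℝ) / (N + 1) < ε ^ 2 := by
      rw [div_lt_iff₀ (by positivity)]
      have hε2 : (0:ℝ) < ε ^ 2 := by positivity
      rw [div_lt_iff₀ hε2] at hN
      nlinarith
    have := lt_of_pow_lt_pow_left₀ 2 (le_of_lt hε) (lt_trans h4 h5)
    simpa using this
  obtain ⟨q, hq⟩ := cauchySeq_tendsto_of_complete hcauchy
  -- f (u n) → A
  have hfA : Filter.Tendsto (fun n => f (u n)) Filter.atTop (nhds A) := by
    have hupper : Filter.Tendsto (fun n : ℕ => A + 1 / (n + 1)) Filter.atTop (nhds A) := by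
      have : Filter.Tendsto (fun n : ℕ => 1 / ((n:ℝ) + 1)) Filter.atTop (nhds 0) :=
        tendsto_one_div_add_atTop_nhds_zero_nat
      simpa using (tendsto_const_nhds.add this)
    exact tendsto_of_tendsto_of_tendsto_of_le_of_le tendsto_const_nhds hupper
      (fun n => hAle (u n)) (fun n => le_of_lt (hu n))
  have hfq : f q = A :=
    tendsto_nhds_unique ((hfcont.tendsto q).comp hq) hfA
  refine ⟨q, ?_, ?_⟩
  · intro p _
    simp only [Set.mem_setOf_eq]
    calc f q = A := hfq
      _ ≤ f p := hAle p
  · intro r hr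
    have hfr : f r ≤ f q := hr (Set.mem_univ q)
    have hfrA : f r = A := le_antisymm (hfq ▸ hfr) (hAle r)
    have h := hdistsq r q
    have : dist r q ^ 2 ≤ 0 := by rw [hfrA, hfq] at h; linarith
    have : dist r q = 0 := by nlinarith [dist_nonneg (x := r) (y := q), sq_nonneg (dist r q)]
    exact dist_eq_zero.mp this
end

section
/- Let A be an invertible real N×N matrix with polar decomposition A = QP (Q orthogonal, P symmetric positive definite). Define the iteration Q₀ := A, Q_{k+1} := (Q_k + Q_k^{-T})/2. Then each Q_k is invertible, the sequence (Q_k) converges to Q, and the convergence is quadratic. -/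
/-!
Diagonalize `P = U diag(λ) Uᵀ` with `U` orthogonal. The iteration acts on the eigenvalues only:
`Q_k = Q U diag(f^[k] λ) Uᵀ` with `f x = (x + x⁻¹)/2`, and `f^[k] x → 1` for `x > 0`, so `Q_k → Q`.
Since `Qᵀ Q_k` is symmetric, `Q_k⁻ᵀ = Q Q_k⁻¹ Q`, which gives Higham's error identity
`Q_{k+1} - Q = ½ (Q_k - Q) Q_k⁻¹ (Q_k - Q)`; the factor `Q_k⁻¹` stays bounded because it converges
to `Q⁻¹`.
-/

open Filter Topology Set

attribute [local instance] Matrix.frobeniusNormedAddCommGroup Matrix.frobeniusNormSMulClass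

noncomputable def polarStep (x : ℝ) : ℝ := 2⁻¹ * (x + x⁻¹)

lemma polarStep_sub_one {x : ℝ} (hx : x ≠ 0) : polarStep x - 1 = (x - 1) ^ 2 / (2 * x) := by
  unfold polarStep; field_simp; ring

lemma one_le_polarStep {x : ℝ} (hx : 0 < x) : 1 ≤ polarStep x := by
  have : 0 ≤ (x - 1) ^ 2 / (2 * x) := by positivity
  linarith [polarStep_sub_one hx.ne']

lemma polarStep_sub_one_le_half {x : ℝ} (hx : 1 ≤ x) : polarStep x - 1 ≤ (x - 1) / 2 := by
  rw [polarStep_sub_one (by positivity), div_le_div_iff₀ (by positivity) two_pos]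
  nlinarith

lemma mapsTo_polarStep_Ioi : MapsTo polarStep (Ioi 0) (Ioi 0) :=
  fun _ hx => zero_lt_one.trans_le (one_le_polarStep hx)

lemma mapsTo_polarStep_Ici : MapsTo polarStep (Ici 1) (Ici 1) :=
  fun _ hx => one_le_polarStep (zero_lt_one.trans_le hx)

lemma iterate_polarStep_sub_one_le {x : ℝ} (hx : 1 ≤ x) (k : ℕ) :
    polarStep^[k] x - 1 ≤ (x - 1) / 2 ^ k := by
  induction k with
  | zero => simp
  | succ k ih =>
    rw [Function.iterate_succ_apply', pow_succ, ← div_div]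
    have := polarStep_sub_one_le_half (mapsTo_polarStep_Ici.iterate k hx)
    linarith

/-- After one step `x ≥ 1`, and from there on the distance to `1` at least halves. -/
lemma tendsto_iterate_polarStep {x : ℝ} (hx : 0 < x) :
    Tendsto (fun k => polarStep^[k] x) atTop (𝓝 1) := by
  have hy : 1 ≤ polarStep x := one_le_polarStep hx
  have hgeom : Tendsto (fun k : ℕ => 1 + (polarStep x - 1) / 2 ^ k) atTop (𝓝 1) := by
    simpa using tendsto_const_nhds.add
      (tendsto_const_nhds.div_atTop (tendsto_pow_atTop_atTop_of_one_lt (one_lt_two (α := ℝ))))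
  refine (tendsto_add_atTop_iff_nat 1).mp ?_
  simp only [Function.iterate_succ_apply]
  refine tendsto_of_tendsto_of_tendsto_of_le_of_le tendsto_const_nhds hgeom
    (fun k => mapsTo_polarStep_Ici.iterate k hy) (fun k => ?_)
  linarith [iterate_polarStep_sub_one_le hy k]

namespace Matrix

variable {n : Type*} [Fintype n] [DecidableEq n]

lemma PosDef.exists_orthogonal_diagonal {P : Matrix n n ℝ} (hP : P.PosDef) :
    ∃ U ∈ orthogonalGroup n ℝ, ∃ d : n → ℝ, (∀ i, 0 < d i) ∧ P = U * diagonal d * Uᵀ := by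
  refine ⟨_, hP.isHermitian.eigenvectorUnitary.2, _, hP.eigenvalues_pos, ?_⟩
  simpa [star_eq_conjTranspose] using hP.isHermitian.spectral_theorem

noncomputable def polarNewtonStep (M : Matrix n n ℝ) : Matrix n n ℝ := (2 : ℝ)⁻¹ • (M + M⁻¹ᵀ)

variable {Q U : Matrix n n ℝ}

lemma conj_diagonal_mul_conj_diagonal (hU : U ∈ orthogonalGroup n ℝ) (d e : n → ℝ) :
    U * diagonal d * Uᵀ * (U * diagonal e * Uᵀ) = U * diagonal (d * e) * Uᵀ := by
  rw [show diagonal (d * e) = diagonal d * diagonal e from (diagonal_mul_diagonal d e).symm]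
  simp only [Matrix.mul_assoc, ← Matrix.mul_assoc Uᵀ U, (mem_orthogonalGroup_iff' n ℝ).mp hU,
    Matrix.one_mul]

lemma isSymm_conj_diagonal (U : Matrix n n ℝ) (d : n → ℝ) : (U * diagonal d * Uᵀ).IsSymm := by
  simp [IsSymm, Matrix.transpose_mul, Matrix.mul_assoc]

lemma mul_conj_diagonal_mul_inv (hQ : Q ∈ orthogonalGroup n ℝ) (hU : U ∈ orthogonalGroup n ℝ)
    {d : n → ℝ} (hd : ∀ i, d i ≠ 0) :
    Q * (U * diagonal d * Uᵀ) * (U * diagonal d⁻¹ * Uᵀ * Qᵀ) = 1 := by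
  have hdd : d * d⁻¹ = fun _ => 1 := funext fun i => mul_inv_cancel₀ (hd i)
  rw [← Matrix.mul_assoc, Matrix.mul_assoc Q, conj_diagonal_mul_conj_diagonal hU, hdd,
    diagonal_one, Matrix.mul_one, (mem_orthogonalGroup_iff n ℝ).mp hU, Matrix.mul_one,
    (mem_orthogonalGroup_iff n ℝ).mp hQ]

lemma polarNewtonStep_mul_conj_diagonal (hQ : Q ∈ orthogonalGroup n ℝ)
    (hU : U ∈ orthogonalGroup n ℝ) {d : n → ℝ} (hd : ∀ i, d i ≠ 0) :
    polarNewtonStep (Q * (U * diagonal d * Uᵀ)) = Q * (U * diagonal (polarStep ∘ d) * Uᵀ) := by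
  have hinv : (Q * (U * diagonal d * Uᵀ))⁻¹ᵀ = Q * (U * diagonal d⁻¹ * Uᵀ) := by
    rw [inv_eq_right_inv (mul_conj_diagonal_mul_inv hQ hU hd), transpose_mul, transpose_transpose,
      (isSymm_conj_diagonal U _).eq]
  have hstep : diagonal (polarStep ∘ d) = (2 : ℝ)⁻¹ • (diagonal d + diagonal d⁻¹) := by
    rw [diagonal_add, ← diagonal_smul]; rfl
  rw [polarNewtonStep, hinv, hstep]
  simp only [Matrix.mul_smul, Matrix.smul_mul, Matrix.mul_add, Matrix.add_mul]

lemma iterate_polarNewtonStep_mul_conj_diagonal (hQ : Q ∈ orthogonalGroup n ℝ)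
    (hU : U ∈ orthogonalGroup n ℝ) {d : n → ℝ} (hd : ∀ i, 0 < d i) (k : ℕ) :
    polarNewtonStep^[k] (Q * (U * diagonal d * Uᵀ)) =
      Q * (U * diagonal (fun i => polarStep^[k] (d i)) * Uᵀ) := by
  induction k with
  | zero => rfl
  | succ k ih =>
    rw [Function.iterate_succ_apply', ih, polarNewtonStep_mul_conj_diagonal hQ hU
      fun i => (mapsTo_polarStep_Ioi.iterate k (hd i)).ne']
    simp only [Function.comp_def, Function.iterate_succ_apply']

lemma tendsto_mul_conj_diagonal_iterate_polarStep (hU : U ∈ orthogonalGroup n ℝ)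
    {d : n → ℝ} (hd : ∀ i, 0 < d i) :
    Tendsto (fun k => Q * (U * diagonal (fun i => polarStep^[k] (d i)) * Uᵀ)) atTop (𝓝 Q) := by
  have hcont : Continuous fun e : n → ℝ => Q * (U * diagonal e * Uᵀ) := by fun_prop
  have hlim := (hcont.tendsto 1).comp
    (tendsto_pi_nhds.mpr fun i => tendsto_iterate_polarStep (hd i))
  rwa [Pi.one_def, diagonal_one, Matrix.mul_one, (mem_orthogonalGroup_iff n ℝ).mp hU,
    Matrix.mul_one] at hlim

lemma transpose_inv_eq_mul_inv_mul {M : Matrix n n ℝ} (hQ : Q ∈ orthogonalGroup n ℝ)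
    (hM : IsUnit M.det) (hS : (Qᵀ * M).IsSymm) : M⁻¹ᵀ = Q * M⁻¹ * Q := by
  have hMQ : Mᵀ * Q = Qᵀ * M := by simpa [IsSymm, transpose_mul] using hS
  rw [transpose_nonsing_inv]
  apply inv_eq_right_inv
  rw [← Matrix.mul_assoc, ← Matrix.mul_assoc, hMQ, Matrix.mul_assoc Qᵀ, mul_nonsing_inv M hM,
    Matrix.mul_one, (mem_orthogonalGroup_iff' n ℝ).mp hQ]

lemma polarNewtonStep_sub {M : Matrix n n ℝ} (hQ : Q ∈ orthogonalGroup n ℝ)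
    (hM : IsUnit M.det) (hS : (Qᵀ * M).IsSymm) :
    polarNewtonStep M - Q = (2 : ℝ)⁻¹ • ((M - Q) * M⁻¹ * (M - Q)) := by
  rw [polarNewtonStep, transpose_inv_eq_mul_inv_mul hQ hM hS, Matrix.sub_mul,
    mul_nonsing_inv M hM, Matrix.sub_mul, Matrix.mul_sub (Q * M⁻¹), Matrix.mul_assoc Q M⁻¹ M,
    nonsing_inv_mul M hM, Matrix.one_mul, Matrix.mul_one]
  module

lemma norm_polarNewtonStep_sub_le {M : Matrix n n ℝ} (hQ : Q ∈ orthogonalGroup n ℝ)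
    (hM : IsUnit M.det) (hS : (Qᵀ * M).IsSymm) :
    ‖polarNewtonStep M - Q‖ ≤ 2⁻¹ * ‖M⁻¹‖ * ‖M - Q‖ ^ 2 := by
  rw [polarNewtonStep_sub hQ hM hS, norm_smul, norm_inv, Real.norm_two, Matrix.mul_assoc]
  calc 2⁻¹ * ‖(M - Q) * (M⁻¹ * (M - Q))‖
      ≤ 2⁻¹ * (‖M - Q‖ * (‖M⁻¹‖ * ‖M - Q‖)) := by
        gcongr
        exact (frobenius_norm_mul _ _).trans (by gcongr; exact frobenius_norm_mul _ _)
    _ = 2⁻¹ * ‖M⁻¹‖ * ‖M - Q‖ ^ 2 := by ring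

lemma exists_norm_polarNewtonStep_sub_le (hQ : Q ∈ orthogonalGroup n ℝ) {M : ℕ → Matrix n n ℝ}
    (hM : ∀ k, IsUnit (M k).det) (hS : ∀ k, (Qᵀ * M k).IsSymm) (hlim : Tendsto M atTop (𝓝 Q)) :
    ∃ C, 0 < C ∧ ∀ k, ‖polarNewtonStep (M k) - Q‖ ≤ C * ‖M k - Q‖ ^ 2 := by
  have hQdet : Q.det ≠ 0 :=
    (isUnit_det_of_right_inverse ((mem_orthogonalGroup_iff n ℝ).mp hQ)).ne_zero
  have hinv : ContinuousAt Inv.inv Q :=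
    continuousAt_matrix_inv Q (by rw [Ring.inverse_eq_inv']; exact continuousAt_inv₀ hQdet)
  obtain ⟨B, hB⟩ := (hinv.tendsto.comp hlim).norm.bddAbove_range
  refine ⟨2⁻¹ * max B 1, by positivity,
    fun k => (norm_polarNewtonStep_sub_le hQ (hM k) (hS k)).trans ?_⟩
  gcongr
  exact le_max_of_le_left (hB ⟨k, rfl⟩)

end Matrix

open Matrix

theorem polar_newton_iteration_quadratic_convergence_general
    {N : ℕ} (A Q P : Matrix (Fin N) (Fin N) ℝ)
    (hQ : Q ∈ Matrix.orthogonalGroup (Fin N) ℝ)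
    (hP : P.PosDef)
    (hQP : A = Q * P)
    (Qseq : ℕ → Matrix (Fin N) (Fin N) ℝ)
    (hQ0 : Qseq 0 = A)
    (hrec : ∀ k, Qseq (k + 1) = (2 : ℝ)⁻¹ • (Qseq k + ((Qseq k)⁻¹)ᵀ)) :
    (∀ k, IsUnit (Qseq k).det) ∧
    Filter.Tendsto Qseq Filter.atTop (nhds Q) ∧
    ∃ C : ℝ, 0 < C ∧ ∀ k, ‖Qseq (k + 1) - Q‖ ≤ C * ‖Qseq k - Q‖ ^ 2 := by
  obtain ⟨U, hU, lam, hlam, rfl⟩ := hP.exists_orthogonal_diagonal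
  set x : ℕ → Fin N → ℝ := fun k i => polarStep^[k] (lam i)
  have hseq : ∀ k, Qseq k = Q * (U * diagonal (x k) * Uᵀ) := by
    intro k
    rw [← iterate_polarNewtonStep_mul_conj_diagonal hQ hU hlam, ← hQP]
    induction k with
    | zero => exact hQ0
    | succ k ih => rw [hrec, ih, Function.iterate_succ_apply']; rfl
  have hunit : ∀ k, IsUnit (Qseq k).det := fun k => by
    rw [hseq]
    exact isUnit_det_of_right_inverse
      (mul_conj_diagonal_mul_inv hQ hU fun i => (mapsTo_polarStep_Ioi.iterate k (hlam i)).ne')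
  have hsymm : ∀ k, (Qᵀ * Qseq k).IsSymm := fun k => by
    rw [hseq, ← Matrix.mul_assoc, (mem_orthogonalGroup_iff' _ ℝ).mp hQ, Matrix.one_mul]
    exact isSymm_conj_diagonal U (x k)
  have hlim : Tendsto Qseq atTop (𝓝 Q) := by
    rw [funext hseq]
    exact tendsto_mul_conj_diagonal_iterate_polarStep hU hlam
  obtain ⟨C, hC, hquad⟩ := exists_norm_polarNewtonStep_sub_le hQ hunit hsymm hlim
  exact ⟨hunit, hlim, C, hC, fun k => hrec k ▸ hquad k⟩

/-- Higham's iteration for the polar decomposition: let `A` be invertible with polar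
decomposition `A = QP` (`Q` orthogonal, `P` symmetric positive definite), and define
`Q₀ = A`, `Q_{k+1} = (Q_k + Q_k^{-T})/2`.  Then every `Q_k` is invertible, the sequence
converges to the polar factor `Q`, and the convergence is quadratic. -/
theorem polar_newton_iteration_quadratic_convergence
    {N : ℕ} (A Q P : Matrix (Fin N) (Fin N) ℝ)
    (hA : IsUnit A.det)
    (hQ : Q ∈ Matrix.orthogonalGroup (Fin N) ℝ)
    (hP : P.PosDef)
    (hQP : A = Q * P)
    (Qseq : ℕ → Matrix (Fin N) (Fin N) ℝ)
    (hQ0 : Qseq 0 = A)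
    (hrec : ∀ k, Qseq (k + 1) = (2 : ℝ)⁻¹ • (Qseq k + ((Qseq k)⁻¹)ᵀ)) :
    (∀ k, IsUnit (Qseq k).det) ∧
    Filter.Tendsto Qseq Filter.atTop (nhds Q) ∧
    ∃ C : ℝ, 0 < C ∧ ∀ k, ‖Qseq (k + 1) - Q‖ ≤ C * ‖Qseq k - Q‖ ^ 2 :=
  polar_newton_iteration_quadratic_convergence_general A Q P hQ hP hQP Qseq hQ0 hrec
end

section
/- Let A be an invertible real N×N matrix. The polar factor Q of A (the orthogonal matrix in the polar decomposition A = QP with P symmetric positive definite) is the unique minimizer of ‖A − R‖_F over all R ∈ O(N), where ‖·‖_F is the Frobenius norm; moreover if det A > 0 then Q ∈ SO(N) and Q minimizes ‖A − R‖_F over R ∈ SO(N). -/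
open scoped Matrix

attribute [local instance] Matrix.frobeniusNormedAddCommGroup

/-!
For orthogonal `R`, expanding the Frobenius norm gives
`‖QP - R‖² = ‖QP - Q‖² + tr((Q - R) P (Q - R)ᵀ)`, and the trace is positive for `R ≠ Q` because
`P` is positive definite. If `det A > 0` then `det Q = det A / det P > 0`, so `det Q = 1`, and
minimality over `SO(N)` is inherited from minimality over `O(N)`.
-/

namespace Matrix

section Frobenius

variable {m n : Type*} [Fintype m] [Fintype n]

theorem frobenius_norm_sq_eq_trace (X : Matrix m n ℝ) : ‖X‖ ^ 2 = trace (Xᵀ * X) := by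
  rw [frobenius_norm_def, ← Real.rpow_natCast, ← Real.rpow_mul (by positivity), Finset.sum_comm]
  norm_num [trace, mul_apply, sq]

theorem frobenius_norm_sub_sq (X Y : Matrix m n ℝ) :
    ‖X - Y‖ ^ 2 = ‖X‖ ^ 2 - 2 * trace (Yᵀ * X) + ‖Y‖ ^ 2 := by
  have hXY : trace (Xᵀ * Y) = trace (Yᵀ * X) := by
    rw [← trace_transpose, transpose_mul, transpose_transpose]
  simp only [frobenius_norm_sq_eq_trace, transpose_sub, Matrix.sub_mul, Matrix.mul_sub, trace_sub,
    hXY]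
  ring

theorem frobenius_norm_sq_of_mem_orthogonalGroup [DecidableEq n] {R : Matrix n n ℝ}
    (hR : R ∈ orthogonalGroup n ℝ) : ‖R‖ ^ 2 = Fintype.card n := by
  rw [frobenius_norm_sq_eq_trace, (mem_orthogonalGroup_iff' n ℝ).mp hR, trace_one]

theorem frobenius_norm_mul_sub_sq [DecidableEq n] {Q R P : Matrix n n ℝ}
    (hQ : Q ∈ orthogonalGroup n ℝ) (hR : R ∈ orthogonalGroup n ℝ) (hP : Pᵀ = P) :
    ‖Q * P - R‖ ^ 2 = ‖Q * P - Q‖ ^ 2 + trace ((Q - R) * P * (Q - R)ᵀ) := by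
  have hQQ : Qᵀ * Q = 1 := (mem_orthogonalGroup_iff' n ℝ).mp hQ
  have hRR : Rᵀ * R = 1 := (mem_orthogonalGroup_iff' n ℝ).mp hR
  have hQR : trace (Qᵀ * R * P) = trace (Rᵀ * Q * P) := by
    rw [← trace_transpose, transpose_mul, transpose_mul, transpose_transpose, hP, trace_mul_cycle,
      Matrix.mul_assoc, trace_mul_comm]
  have hexcess : trace ((Q - R) * P * (Q - R)ᵀ) = 2 * trace P - 2 * trace (Rᵀ * Q * P) := by
    rw [trace_mul_cycle]
    simp only [transpose_sub, Matrix.sub_mul, Matrix.mul_sub, trace_sub, hQQ, hRR, hQR,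
      Matrix.one_mul]
    ring
  rw [frobenius_norm_sub_sq, frobenius_norm_sub_sq, frobenius_norm_sq_of_mem_orthogonalGroup hQ,
    frobenius_norm_sq_of_mem_orthogonalGroup hR, ← Matrix.mul_assoc, ← Matrix.mul_assoc, hQQ,
    Matrix.one_mul, hexcess]
  ring

end Frobenius

theorem PosDef.trace_mul_mul_conjTranspose_pos {m n R : Type*} [Fintype m] [Fintype n]
    [Ring R] [PartialOrder R] [StarRing R] [IsOrderedAddMonoid R]
    {P : Matrix n n R} (hP : P.PosDef) {M : Matrix m n R} (hM : M ≠ 0) :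
    0 < trace (M * P * Mᴴ) := by
  have hdiag : ∀ i, (M * P * Mᴴ) i i = star (star (M i)) ⬝ᵥ (P *ᵥ star (M i)) := by
    intro i
    simp only [mul_apply, conjTranspose_apply, Finset.sum_mul, mul_assoc, dotProduct, Pi.star_apply,
      star_star, mulVec, Finset.mul_sum]
    exact Finset.sum_comm
  obtain ⟨i, hi⟩ : ∃ i, M i ≠ 0 := by
    by_contra! h
    exact hM (funext h)
  rw [trace]
  simp only [diag, hdiag]
  exact Finset.sum_pos' (fun j _ => hP.posSemidef.dotProduct_mulVec_nonneg _)
    ⟨i, Finset.mem_univ _, hP.dotProduct_mulVec_pos (by simpa using hi)⟩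

theorem det_eq_one_of_mem_orthogonalGroup_of_pos {n R : Type*} [Fintype n] [DecidableEq n]
    [CommRing R] [LinearOrder R] [IsStrictOrderedRing R] {Q : Matrix n n R}
    (hQ : Q ∈ orthogonalGroup n R) (hpos : 0 < Q.det) : Q.det = 1 := by
  have h := congrArg det ((mem_orthogonalGroup_iff' n R).mp hQ)
  rw [det_mul, det_transpose, det_one] at h
  exact (mul_self_eq_one_iff.mp h).resolve_right (by linarith)

end Matrix

theorem polar_factor_closest_orthogonal_general
    {N : ℕ} (A Q P : Matrix (Fin N) (Fin N) ℝ)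
    (hQ : Q ∈ Matrix.orthogonalGroup (Fin N) ℝ)
    (hP : P.PosDef)
    (hQP : A = Q * P) :
    (∀ R ∈ Matrix.orthogonalGroup (Fin N) ℝ, R ≠ Q → ‖A - Q‖ < ‖A - R‖) ∧
    (0 < A.det → Q.det = 1 ∧
      ∀ R ∈ Matrix.orthogonalGroup (Fin N) ℝ, R.det = 1 → ‖A - Q‖ ≤ ‖A - R‖) := by
  subst hQP
  have hPsymm : Pᵀ = P := hP.isHermitian
  have closest : ∀ R ∈ Matrix.orthogonalGroup (Fin N) ℝ, R ≠ Q → ‖Q * P - Q‖ < ‖Q * P - R‖ := by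
    intro R hR hRQ
    have hexcess := hP.trace_mul_mul_conjTranspose_pos (sub_ne_zero.mpr hRQ.symm)
    rw [Matrix.conjTranspose_eq_transpose_of_trivial] at hexcess
    refine lt_of_pow_lt_pow_left₀ 2 (norm_nonneg _) ?_
    rw [Matrix.frobenius_norm_mul_sub_sq hQ hR hPsymm]
    linarith
  refine ⟨closest, fun hdet => ⟨?_, fun R hR _ => ?_⟩⟩
  · rw [Matrix.det_mul] at hdet
    exact Matrix.det_eq_one_of_mem_orthogonalGroup_of_pos hQ
      ((pos_iff_pos_of_mul_pos hdet).mpr hP.det_pos)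
  · rcases eq_or_ne R Q with rfl | hRQ
    · exact le_rfl
    · exact (closest R hR hRQ).le

/-- The polar factor `Q` of an invertible matrix `A = QP` (`Q` orthogonal, `P` symmetric
positive definite) is the unique minimizer of `‖A − R‖_F` over the orthogonal group;
moreover if `det A > 0` then `Q ∈ SO(N)` and `Q` minimizes `‖A − R‖_F` over `SO(N)`. -/
theorem polar_factor_closest_orthogonal
    {N : ℕ} (A Q P : Matrix (Fin N) (Fin N) ℝ)
    (hA : IsUnit A.det)
    (hQ : Q ∈ Matrix.orthogonalGroup (Fin N) ℝ)
    (hP : P.PosDef)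
    (hQP : A = Q * P) :
    (∀ R ∈ Matrix.orthogonalGroup (Fin N) ℝ, R ≠ Q → ‖A - Q‖ < ‖A - R‖) ∧
    (0 < A.det → Q.det = 1 ∧
      ∀ R ∈ Matrix.orthogonalGroup (Fin N) ℝ, R.det = 1 → ‖A - Q‖ ≤ ‖A - R‖) :=
  polar_factor_closest_orthogonal_general A Q P hQ hP hQP
end
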